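/- Let σ₁², σ₂² > 0 and b ∈ ℝ with |b| ≤ σ₁² and |b| ≤ σ₂² (diagonal dominance of the covariance matrix). Consider the discrete operator on interior grid values L_h U_{ij} = U_{ij}/Δt - (σ₁²/2)δ_x²U_{ij} - (σ₂²/2)δ_y²U_{ij} - b·δ^α_{xy}U_{ij}, where α = + if b ≥ 0 and α = − if b < 0. Then the matrix of L_h (with homogeneous Dirichlet boundary values) has positive diagonal entries, nonpositive off-diagonal entries, and is strictly diagonally dominant by rows. -/
import Mathlib

def stencil (p : ℤ × ℤ) : Finset (ℤ × ℤ) :=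
  {p, (p.1 + 1, p.2), (p.1 - 1, p.2), (p.1, p.2 + 1), (p.1, p.2 - 1),
    (p.1 + 1, p.2 + 1), (p.1 - 1, p.2 - 1), (p.1 + 1, p.2 - 1),
    (p.1 - 1, p.2 + 1)}

noncomputable def Lh (s1 s2 b Δt h : ℝ) (U : ℤ × ℤ → ℝ) (p : ℤ × ℤ) : ℝ :=
  U p / Δt
    - s1 / 2 * ((U (p.1 + 1, p.2) - 2 * U p + U (p.1 - 1, p.2)) / h ^ 2)
    - s2 / 2 * ((U (p.1, p.2 + 1) - 2 * U p + U (p.1, p.2 - 1)) / h ^ 2)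
    - b * (if 0 ≤ b then
        (U (p.1 + 1, p.2 + 1) + 2 * U p + U (p.1 - 1, p.2 - 1)
          - U (p.1 + 1, p.2) - U (p.1 - 1, p.2)
          - U (p.1, p.2 + 1) - U (p.1, p.2 - 1)) / (2 * h ^ 2)
      else
        (U (p.1 + 1, p.2) + U (p.1 - 1, p.2) + U (p.1, p.2 + 1)
          + U (p.1, p.2 - 1) - U (p.1 + 1, p.2 - 1) - 2 * U p
          - U (p.1 - 1, p.2 + 1)) / (2 * h ^ 2))

lemma i1 (a : ℤ) : a + 1 ≠ a := by omega
lemma i2 (a : ℤ) : a - 1 ≠ a := by omega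
lemma i3 (a : ℤ) : a ≠ a + 1 := by omega
lemma i4 (a : ℤ) : a ≠ a - 1 := by omega
lemma i5 (a : ℤ) : a + 1 ≠ a - 1 := by omega
lemma i6 (a : ℤ) : a - 1 ≠ a + 1 := by omega

section evals
variable (s1 s2 b Δt h : ℝ) (i j : ℤ)

lemma evP : Lh s1 s2 b Δt h (fun r => if r = (i, j) then 1 else 0) (i, j)
    = 1 / Δt + (s1 + s2 - |b|) / h ^ 2 := by
  rcases le_or_gt 0 b with hb | hb
  · rw [abs_of_nonneg hb]; simp [Lh, i1, i2, i3, i4, i5, i6, hb]; ring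
  · rw [abs_of_neg hb]; simp [Lh, i1, i2, i3, i4, i5, i6, not_le.mpr hb]; ring

lemma evE : Lh s1 s2 b Δt h (fun r => if r = (i + 1, j) then 1 else 0) (i, j)
    = (|b| - s1) / (2 * h ^ 2) := by
  rcases le_or_gt 0 b with hb | hb
  · rw [abs_of_nonneg hb]; simp [Lh, i1, i2, i3, i4, i5, i6, hb]; ring
  · rw [abs_of_neg hb]; simp [Lh, i1, i2, i3, i4, i5, i6, not_le.mpr hb]; ring

lemma evW : Lh s1 s2 b Δt h (fun r => if r = (i - 1, j) then 1 else 0) (i, j)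
    = (|b| - s1) / (2 * h ^ 2) := by
  rcases le_or_gt 0 b with hb | hb
  · rw [abs_of_nonneg hb]; simp [Lh, i1, i2, i3, i4, i5, i6, hb]; ring
  · rw [abs_of_neg hb]; simp [Lh, i1, i2, i3, i4, i5, i6, not_le.mpr hb]; ring

lemma evN : Lh s1 s2 b Δt h (fun r => if r = (i, j + 1) then 1 else 0) (i, j)
    = (|b| - s2) / (2 * h ^ 2) := by
  rcases le_or_gt 0 b with hb | hb
  · rw [abs_of_nonneg hb]; simp [Lh, i1, i2, i3, i4, i5, i6, hb]; ring
  · rw [abs_of_neg hb]; simp [Lh, i1, i2, i3, i4, i5, i6, not_le.mpr hb]; ring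

lemma evS : Lh s1 s2 b Δt h (fun r => if r = (i, j - 1) then 1 else 0) (i, j)
    = (|b| - s2) / (2 * h ^ 2) := by
  rcases le_or_gt 0 b with hb | hb
  · rw [abs_of_nonneg hb]; simp [Lh, i1, i2, i3, i4, i5, i6, hb]; ring
  · rw [abs_of_neg hb]; simp [Lh, i1, i2, i3, i4, i5, i6, not_le.mpr hb]; ring

lemma evNE : Lh s1 s2 b Δt h (fun r => if r = (i + 1, j + 1) then 1 else 0) (i, j)
    = (if 0 ≤ b then -b / (2 * h ^ 2) else 0) := by
  rcases le_or_gt 0 b with hb | hb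
  · simp [Lh, i1, i2, i3, i4, i5, i6, hb]; ring
  · simp [Lh, i1, i2, i3, i4, i5, i6, not_le.mpr hb]

lemma evSW : Lh s1 s2 b Δt h (fun r => if r = (i - 1, j - 1) then 1 else 0) (i, j)
    = (if 0 ≤ b then -b / (2 * h ^ 2) else 0) := by
  rcases le_or_gt 0 b with hb | hb
  · simp [Lh, i1, i2, i3, i4, i5, i6, hb]; ring
  · simp [Lh, i1, i2, i3, i4, i5, i6, not_le.mpr hb]

lemma evSE : Lh s1 s2 b Δt h (fun r => if r = (i + 1, j - 1) then 1 else 0) (i, j)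
    = (if 0 ≤ b then 0 else b / (2 * h ^ 2)) := by
  rcases le_or_gt 0 b with hb | hb
  · simp [Lh, i1, i2, i3, i4, i5, i6, hb]
  · simp [Lh, i1, i2, i3, i4, i5, i6, not_le.mpr hb]; ring

lemma evNW : Lh s1 s2 b Δt h (fun r => if r = (i - 1, j + 1) then 1 else 0) (i, j)
    = (if 0 ≤ b then 0 else b / (2 * h ^ 2)) := by
  rcases le_or_gt 0 b with hb | hb
  · simp [Lh, i1, i2, i3, i4, i5, i6, hb]
  · simp [Lh, i1, i2, i3, i4, i5, i6, not_le.mpr hb]; ring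

lemma evOne : Lh s1 s2 b Δt h (fun _ => 1) (i, j) = 1 / Δt := by
  rcases le_or_gt 0 b with hb | hb
  · simp [Lh, hb]; ring
  · simp [Lh, not_le.mpr hb]; ring

end evals

/-- Under diagonal dominance of the covariance matrix, the matrix of L_h has
positive diagonal, nonpositive off-diagonal entries, and is strictly
diagonally dominant by rows. -/
theorem Lh_matrix_Mmatrix (s1 s2 b Δt h : ℝ)
    (hs1 : 0 < s1) (hs2 : 0 < s2) (hΔt : 0 < Δt) (hh : 0 < h)
    (hb1 : |b| ≤ s1) (hb2 : |b| ≤ s2)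
    (A : (ℤ × ℤ) → (ℤ × ℤ) → ℝ)
    (hA : ∀ (U : ℤ × ℤ → ℝ) (p : ℤ × ℤ),
      Lh s1 s2 b Δt h U p = ∑ q ∈ stencil p, A p q * U q)
    (hsupp : ∀ p q, q ∉ stencil p → A p q = 0) :
    (∀ p, 0 < A p p) ∧
    (∀ p q, p ≠ q → A p q ≤ 0) ∧
    (∀ p, ∑ q ∈ (stencil p).erase p, |A p q| < A p p) := by
  have h2 : (0 : ℝ) < h ^ 2 := by positivity
  have hmemself : ∀ p : ℤ × ℤ, p ∈ stencil p := by intro p; simp [stencil]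
  have key : ∀ p q : ℤ × ℤ, q ∈ stencil p →
      A p q = Lh s1 s2 b Δt h (fun r => if r = q then 1 else 0) p := by
    intro p q hq
    rw [hA]
    simp only [mul_ite, mul_one, mul_zero]
    rw [Finset.sum_ite_eq' (stencil p) q (A p)]
    simp [hq]
  -- diagonal
  have hdiag : ∀ p, 0 < A p p := by
    rintro ⟨i, j⟩
    rw [key (i, j) (i, j) (hmemself _), evP]
    have h1 : 0 < 1 / Δt := by positivity
    have h3 : 0 ≤ (s1 + s2 - |b|) / h ^ 2 :=
      div_nonneg (by linarith) h2.le
    linarith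
  -- off-diagonal
  have hoff : ∀ p q, p ≠ q → A p q ≤ 0 := by
    rintro ⟨i, j⟩ q hpq
    by_cases hq : q ∈ stencil (i, j)
    · simp only [stencil, Finset.mem_insert, Finset.mem_singleton] at hq
      have habs := abs_nonneg b
      rcases hq with hq | hq | hq | hq | hq | hq | hq | hq | hq <;> subst hq
      · exact absurd rfl hpq
      · rw [key _ _ (by simp [stencil]), evE]
        exact div_nonpos_of_nonpos_of_nonneg (by linarith) (by positivity)
      · rw [key _ _ (by simp [stencil]), evW]
        exact div_nonpos_of_nonpos_of_nonneg (by linarith) (by positivity)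
      · rw [key _ _ (by simp [stencil]), evN]
        exact div_nonpos_of_nonpos_of_nonneg (by linarith) (by positivity)
      · rw [key _ _ (by simp [stencil]), evS]
        exact div_nonpos_of_nonpos_of_nonneg (by linarith) (by positivity)
      · rw [key _ _ (by simp [stencil]), evNE]
        split_ifs with hb
        · exact div_nonpos_of_nonpos_of_nonneg (by linarith) (by positivity)
        · exact le_refl 0
      · rw [key _ _ (by simp [stencil]), evSW]
        split_ifs with hb
        · exact div_nonpos_of_nonpos_of_nonneg (by linarith) (by positivity)
        · exact le_refl 0
      · rw [key _ _ (by simp [stencil]), evSE]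
        split_ifs with hb
        · exact le_refl 0
        · exact div_nonpos_of_nonpos_of_nonneg (by linarith [not_le.mp hb]) (by positivity)
      · rw [key _ _ (by simp [stencil]), evNW]
        split_ifs with hb
        · exact le_refl 0
        · exact div_nonpos_of_nonpos_of_nonneg (by linarith [not_le.mp hb]) (by positivity)
    · exact (hsupp _ _ hq).le
  refine ⟨hdiag, hoff, ?_⟩
  -- row sums
  have hconst : ∀ p : ℤ × ℤ, ∑ q ∈ stencil p, A p q = 1 / Δt := by
    rintro ⟨i, j⟩
    have := hA (fun _ => 1) (i, j)
    rw [evOne] at this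
    simpa using this.symm
  intro p
  have hle : ∀ q ∈ (stencil p).erase p, A p q ≤ 0 := fun q hq =>
    hoff p q (Ne.symm (Finset.ne_of_mem_erase hq))
  have e1 : ∑ q ∈ (stencil p).erase p, |A p q|
      = -∑ q ∈ (stencil p).erase p, A p q := by
    rw [← Finset.sum_neg_distrib]
    exact Finset.sum_congr rfl fun q hq => abs_of_nonpos (hle q hq)
  have e2 := Finset.sum_erase_add (stencil p) (A p) (hmemself p)
  rw [hconst p] at e2
  have h1 : 0 < 1 / Δt := by positivity
  rw [e1]
  linarith
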